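/- Let 𝐱=(x₁,x₂), 𝐲=(y₁,y₂) be points of the bidisk with x₁≠y₁ and x₂≠y₂, and let γ be a bijective isometry of the bidisk. Suppose E(𝐱,𝐲) ∩ E(𝐱,γ(𝐱)) = ∅ and E(𝐱,𝐲) ∩ E(𝐱,γ⁻¹(𝐱)) = ∅. Then E(𝐱,𝐲) is γ-invisible to 𝐱 if and only if its spine E_0(𝐱,𝐲) is γ-invisible to 𝐱. -/

import Mathlib

open UpperHalfPlane

noncomputable section

/-- The bidisk `ℍ × ℍ` with the `ℓ²` product metric. -/
abbrev Bidisk : Type := WithLp 2 (UpperHalfPlane × UpperHalfPlane)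

/-- Package a pair of points of `ℍ` as a point of the bidisk. -/
def toBD (p : UpperHalfPlane × UpperHalfPlane) : Bidisk := (WithLp.equiv 2 _).symm p

/-- The equidistant hypersurface between two points of the bidisk. -/
def E (z w : Bidisk) : Set Bidisk := {x : Bidisk | dist x z = dist x w}

/-- A point `p` is `γ`-invisible to `x` if `ρ(p,x) > ρ(p,γ(x))` or `ρ(p,x) > ρ(p,γ⁻¹(x))`. -/
def Invisible (γ : Bidisk ≃ᵢ Bidisk) (x p : Bidisk) : Prop :=
  dist p (γ x) < dist p x ∨ dist p (γ.symm x) < dist p x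

/-!
`E(𝐱,𝐲)` consists of the `(p₁, p₂)` with `d(p₁,x₁)² - d(p₁,y₁)² = d(p₂,y₂)² - d(p₂,x₂)²`, i.e. it is
the union of the products `S_k(x₁,y₁) × S_k(y₂,x₂)`. An isometry of `ℍ` moves `x, y` to `i eᵃ, i eᵇ`
with `a < b`, and in Fermi coordinates `(r, t)` about the imaginary axis
`cosh d(p, i eˢ) = cosh r · cosh (t - s)`. As `w ↦ arcosh (c cosh w)²` is strictly convex, on each
hypercycle `r = const` the map `t ↦ d(p,x)² - d(p,y)²` is an increasing bijection onto `ℝ`, whose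
inverse is continuous in `(r, k)`. So the square hyperbolas are parametrized continuously in `k`,
and `E(𝐱,𝐲)` is a continuous image of `ℝ³`, hence connected. The continuous functions
`ρ(·,γ^{±1}𝐱) - ρ(·,𝐱)` do not vanish on it, so their signs are constant there; and the spine is
nonempty.
-/

open Real Filter
open scoped MatrixGroups

/-- `S_k(z,w)` is the level set `distSqSub z w ⁻¹' {k}`. -/
def distSqSub {X : Type*} [PseudoMetricSpace X] (z w x : X) : ℝ := dist x z ^ 2 - dist x w ^ 2

section LevelParametrization

variable {Θ A : Type*} [TopologicalSpace Θ] [TopologicalSpace A]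

/-- `P` parametrizes the level sets `F ⁻¹' {k}` by `Θ`, continuously in `k`. -/
structure IsLevelParametrization (F : A → ℝ) (P : Θ × ℝ → A) : Prop where
  continuous : Continuous P
  surjective : Function.Surjective P
  apply_eq : ∀ q, F (P q) = q.2

lemma IsLevelParametrization.isPreconnected_setOf_eq {Θ' B : Type*} [TopologicalSpace Θ']
    [TopologicalSpace B] [PreconnectedSpace Θ] [PreconnectedSpace Θ'] {F : A → ℝ} {G : B → ℝ}
    {P : Θ × ℝ → A} {Q : Θ' × ℝ → B} (hP : IsLevelParametrization F P)
    (hQ : IsLevelParametrization G Q) : IsPreconnected {p : A × B | F p.1 = G p.2} := by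
  have : {p : A × B | F p.1 = G p.2} =
      Set.range fun v : Θ × Θ' × ℝ => (P (v.1, v.2.2), Q (v.2.1, v.2.2)) := by
    ext ⟨a, b⟩
    refine ⟨fun h => ?_, ?_⟩
    · obtain ⟨⟨θ, k⟩, rfl⟩ := hP.surjective a
      obtain ⟨⟨θ', k'⟩, rfl⟩ := hQ.surjective b
      obtain rfl : k = k' := (hP.apply_eq _).symm.trans (h.trans (hQ.apply_eq _))
      exact ⟨(θ, θ', k), rfl⟩
    · rintro ⟨v, hv⟩
      obtain ⟨rfl, rfl⟩ := Prod.mk.inj hv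
      exact (hP.apply_eq _).trans (hQ.apply_eq _).symm
  rw [this]
  exact isPreconnected_range ((hP.continuous.comp (by fun_prop)).prodMk
    (hQ.continuous.comp (by fun_prop)))

lemma IsLevelParametrization.comp_isometryEquiv {X Y : Type*} [PseudoMetricSpace X]
    [PseudoMetricSpace Y] {x y : X} (e : X ≃ᵢ Y) {P : Θ × ℝ → Y}
    (hP : IsLevelParametrization (distSqSub (e x) (e y)) P) :
    IsLevelParametrization (distSqSub x y) (e.symm ∘ P) where
  continuous := e.symm.continuous.comp hP.continuous
  surjective := e.symm.surjective.comp hP.surjective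
  apply_eq q := by
    have h : ∀ z, dist (e.symm (P q)) z = dist (P q) (e z) := fun z => by
      rw [← e.dist_eq, e.apply_symm_apply]
    rw [← hP.apply_eq q]
    simp only [distSqSub, Function.comp_apply, h]

end LevelParametrization

lemma continuous_of_strictMono_of_apply_eq {X : Type*} [TopologicalSpace X] {G : X → ℝ → ℝ}
    (hG : ∀ t, Continuous fun x => G x t) (hmono : ∀ x, StrictMono (G x)) {T k : X → ℝ}
    (hk : Continuous k) (hT : ∀ x, G x (T x) = k x) : Continuous T := by
  refine continuous_iff_continuousAt.2 fun x₀ => tendsto_order.2 ⟨fun l hl => ?_, fun u hu => ?_⟩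
  · have h := ((hG l).continuousAt.eventually_lt hk.continuousAt
      ((hmono x₀ hl).trans_eq (hT x₀)))
    filter_upwards [h] with x hx
    exact (hmono x).lt_iff_lt.1 (hx.trans_eq (hT x).symm)
  · have h := (hk.continuousAt.eventually_lt (hG u).continuousAt
      ((hT x₀).symm.trans_lt (hmono x₀ hu)))
    filter_upwards [h] with x hx
    exact (hmono x).lt_iff_lt.1 ((hT x).trans_lt hx)

lemma strictMono_sub_comp_sub {g g' : ℝ → ℝ} (hg' : StrictMono g')
    (hg : ∀ w, HasDerivAt g (g' w) w) {a b : ℝ} (hab : a < b) :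
    StrictMono fun t => g (t - a) - g (t - b) := by
  refine strictMono_of_deriv_pos fun t => ?_
  have h : HasDerivAt (fun t => g (t - a) - g (t - b)) (g' (t - a) - g' (t - b)) t :=
    ((hg (t - a)).comp_sub_const t a).sub ((hg (t - b)).comp_sub_const t b)
  rw [h.deriv, sub_pos]
  exact hg' (by linarith)

section Arcosh

variable {c : ℝ}

lemma one_le_mul_cosh (hc : 1 ≤ c) (w : ℝ) : 1 ≤ c * cosh w :=
  hc.trans (le_mul_of_one_le_right (by linarith) (one_le_cosh w))

lemma one_lt_mul_cosh (hc : 1 < c) (w : ℝ) : 1 < c * cosh w :=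
  hc.trans_le (le_mul_of_one_le_right (by linarith) (one_le_cosh w))

lemma hasDerivAt_arcosh_mul_cosh (hc : 1 < c) (w : ℝ) :
    HasDerivAt (fun w => arcosh (c * cosh w)) (c * sinh w / √((c * cosh w) ^ 2 - 1)) w := by
  have h := (hasDerivAt_arcosh (one_lt_mul_cosh hc w)).comp w ((hasDerivAt_cosh w).const_mul c)
  exact h.congr_deriv (by ring)

lemma hasDerivAt_mul_sinh_div_sqrt (hc : 1 < c) (w : ℝ) :
    HasDerivAt (fun w => c * sinh w / √((c * cosh w) ^ 2 - 1))
      (c * cosh w * (c ^ 2 - 1) / √((c * cosh w) ^ 2 - 1) ^ 3) w := by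
  have hS : 0 < (c * cosh w) ^ 2 - 1 := by nlinarith [one_lt_mul_cosh hc w]
  have hsq := sq_sqrt hS.le
  have hS' := sqrt_pos.2 hS
  have hsqrt : HasDerivAt (fun w => √((c * cosh w) ^ 2 - 1))
      (2 * (c * cosh w) * (c * sinh w) / (2 * √((c * cosh w) ^ 2 - 1))) w := by
    have h := ((((hasDerivAt_cosh w).const_mul c).pow 2).sub_const 1).sqrt hS.ne'
    exact h.congr_deriv (by simp)
  refine (((hasDerivAt_sinh w).const_mul c).div hsqrt hS'.ne').congr_deriv ?_
  generalize √((c * cosh w) ^ 2 - 1) = S at hsq hS' ⊢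
  field_simp
  linear_combination hsq + c ^ 2 * cosh_sq w

lemma arcosh_cosh_abs (w : ℝ) : arcosh (cosh w) = |w| := by
  rw [← cosh_abs, arcosh_cosh (abs_nonneg w)]

lemma strictMono_arcosh_mul_cosh_mul_deriv (hc : 1 < c) :
    StrictMono fun w => arcosh (c * cosh w) * (c * sinh w / √((c * cosh w) ^ 2 - 1)) := by
  refine strictMono_of_deriv_pos fun w => ?_
  have h : HasDerivAt (fun w => arcosh (c * cosh w) * (c * sinh w / √((c * cosh w) ^ 2 - 1))) _ w :=
    (hasDerivAt_arcosh_mul_cosh hc w).mul (hasDerivAt_mul_sinh_div_sqrt hc w)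
  rw [h.deriv]
  have := arcosh_pos (one_lt_mul_cosh hc w)
  have : 0 < c ^ 2 - 1 := by nlinarith
  have : 0 < √((c * cosh w) ^ 2 - 1) := sqrt_pos.2 (by nlinarith [one_lt_mul_cosh hc w])
  have := cosh_pos w
  have : 0 < c := by linarith
  exact add_pos_of_nonneg_of_pos (mul_self_nonneg _) (by positivity)

lemma exists_strictMono_hasDerivAt_sq_arcosh_mul_cosh (hc : 1 ≤ c) :
    ∃ g' : ℝ → ℝ, StrictMono g' ∧ ∀ w, HasDerivAt (fun w => arcosh (c * cosh w) ^ 2) (g' w) w := by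
  rcases hc.eq_or_lt with rfl | hc
  · refine ⟨fun w => 2 * w, strictMono_id.const_mul two_pos, fun w => ?_⟩
    simp only [one_mul, arcosh_cosh_abs, sq_abs]
    simpa using hasDerivAt_pow 2 w
  · refine ⟨fun w => 2 * (arcosh (c * cosh w) * (c * sinh w / √((c * cosh w) ^ 2 - 1))),
      (strictMono_arcosh_mul_cosh_mul_deriv hc).const_mul two_pos, fun w => ?_⟩
    exact ((hasDerivAt_arcosh_mul_cosh hc w).pow 2).congr_deriv (by ring)

lemma continuous_arcosh_comp {X : Type*} [TopologicalSpace X] {f : X → ℝ} (hf : Continuous f)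
    (h : ∀ x, 1 ≤ f x) : Continuous fun x => arcosh (f x) :=
  continuousOn_arcosh.comp_continuous hf h

lemma log_add_arcosh_le_arcosh_mul {K Y : ℝ} (hK : 1 ≤ K) (hY : 1 ≤ Y) :
    log K + arcosh Y ≤ arcosh (K * Y) := by
  rw [← exp_le_exp, exp_add, exp_log (by linarith), exp_arcosh hY, exp_arcosh (by nlinarith)]
  have : K * √(Y ^ 2 - 1) ≤ √((K * Y) ^ 2 - 1) := calc
    K * √(Y ^ 2 - 1) = √(K ^ 2 * (Y ^ 2 - 1)) := by
      rw [sqrt_mul (sq_nonneg K), sqrt_sq (by linarith)]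
    _ ≤ √((K * Y) ^ 2 - 1) := sqrt_le_sqrt (by nlinarith)
  nlinarith

lemma cosh_mul_cosh_le_cosh_add {u v : ℝ} (hu : 0 ≤ u) (hv : 0 ≤ v) :
    cosh u * cosh v ≤ cosh (u + v) := by
  rw [cosh_add]
  exact le_add_of_nonneg_right (mul_nonneg (sinh_nonneg_iff.2 hu) (sinh_nonneg_iff.2 hv))

lemma log_cosh_add_arcosh_mul_cosh_le (hc : 1 ≤ c) {δ w : ℝ} (hδ : 0 ≤ δ) (hw : 0 ≤ w) :
    log (cosh δ) + arcosh (c * cosh w) ≤ arcosh (c * cosh (w + δ)) := by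
  have h := one_le_mul_cosh hc w
  calc log (cosh δ) + arcosh (c * cosh w) ≤ arcosh (cosh δ * (c * cosh w)) :=
        log_add_arcosh_le_arcosh_mul (one_le_cosh δ) h
    _ ≤ arcosh (c * cosh (w + δ)) := by
        refine (arcosh_le_arcosh (by nlinarith [one_le_cosh δ])
          (by nlinarith [one_le_cosh (w + δ)])).2 ?_
        nlinarith [cosh_mul_cosh_le_cosh_add hw hδ]

lemma abs_le_arcosh_mul_cosh (hc : 1 ≤ c) (w : ℝ) : |w| ≤ arcosh (c * cosh w) := by
  rw [← arcosh_cosh_abs]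
  exact (arcosh_le_arcosh (cosh_pos w) (by nlinarith [one_le_mul_cosh hc w])).2
    (le_mul_of_one_le_left (cosh_pos w).le hc)

lemma surjective_sq_arcosh_mul_cosh_sub_sub (hc : 1 ≤ c) {a b : ℝ} (hab : a < b) :
    Function.Surjective fun t => arcosh (c * cosh (t - a)) ^ 2 - arcosh (c * cosh (t - b)) ^ 2 := by
  set F := fun t => arcosh (c * cosh (t - a)) ^ 2 - arcosh (c * cosh (t - b)) ^ 2
  have hcont : Continuous fun w => arcosh (c * cosh w) :=
    continuous_arcosh_comp (by fun_prop) (one_le_mul_cosh hc)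
  have hκ : 0 < log (cosh (b - a)) := log_pos (one_lt_cosh.2 (by linarith))
  have hlow : ∀ t ≥ b, log (cosh (b - a)) * (t - b) ≤ F t := fun t ht => by
    have h₁ := log_cosh_add_arcosh_mul_cosh_le hc (sub_nonneg.2 hab.le) (sub_nonneg.2 ht)
    have h₂ := (le_abs_self (t - b)).trans (abs_le_arcosh_mul_cosh hc (t - b))
    rw [show t - b + (b - a) = t - a by ring] at h₁
    simp only [F]
    -- `A² - B² = (A - B) (A + B)` with `A - B ≥ log (cosh (b - a))` and `A + B ≥ B ≥ t - b`
    nlinarith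
  have hodd : ∀ t, F (a + b - t) = -F t := fun t => by
    simp only [F, show a + b - t - a = -(t - b) by ring, show a + b - t - b = -(t - a) by ring,
      cosh_neg]
    ring
  have htop : Tendsto F atTop atTop :=
    tendsto_atTop_mono' _ (eventually_ge_atTop b |>.mono hlow)
      ((tendsto_id.atTop_add tendsto_const_nhds).const_mul_atTop hκ)
  refine Continuous.surjective (((hcont.comp (continuous_sub_right a)).pow 2).sub
    ((hcont.comp (continuous_sub_right b)).pow 2)) htop ?_
  have hrefl : Tendsto (fun t => a + b - t) atBot atTop := by
    simpa only [sub_eq_add_neg] using tendsto_atTop_add_const_left _ (a + b) tendsto_neg_atBot_atTop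
  have : Tendsto (fun t => -F (a + b - t)) atBot atBot :=
    tendsto_neg_atTop_atBot.comp (htop.comp hrefl)
  simpa only [hodd, neg_neg] using this

end Arcosh

section HyperbolicPlane

def axisPt (s : ℝ) : ℍ := UpperHalfPlane.mk ⟨0, exp s⟩ (exp_pos s)

/-- The point at signed distance `r` from the imaginary axis whose foot on the axis is `i eᵗ`. -/
def fermiPt (r t : ℝ) : ℍ :=
  UpperHalfPlane.mk ⟨exp t * sinh r / cosh r, exp t / cosh r⟩ (by positivity)

lemma cosh_dist_fermiPt_axisPt (r t s : ℝ) :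
    cosh (dist (fermiPt r t) (axisPt s)) = cosh r * cosh (t - s) := by
  rw [cosh_dist, Complex.dist_eq_re_im, sq_sqrt (by positivity)]
  simp only [fermiPt, axisPt, coe_mk, mk_im, cosh_eq (t - s), exp_sub, exp_neg]
  have := cosh_pos r
  have := exp_pos s
  have := exp_pos t
  field_simp
  linear_combination (-(exp t ^ 2)) * cosh_sq r

lemma dist_fermiPt_axisPt (r t s : ℝ) :
    dist (fermiPt r t) (axisPt s) = arcosh (cosh r * cosh (t - s)) := by
  rw [← cosh_dist_fermiPt_axisPt, arcosh_cosh dist_nonneg]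

lemma continuous_fermiPt : Continuous fun q : ℝ × ℝ => fermiPt q.1 q.2 := by
  have h : Continuous fun q : ℝ × ℝ => (exp q.2 * sinh q.1 / cosh q.1, exp q.2 / cosh q.1) := by
    fun_prop (disch := intros; positivity)
  exact (Complex.equivRealProdCLM.symm.continuous.comp h).upperHalfPlaneMk _

lemma exists_fermiPt_eq (p : ℍ) : ∃ r t, fermiPt r t = p := by
  have him := p.im_pos
  have hnorm : 0 < ‖(p : ℂ)‖ := norm_pos_iff.2 p.ne_zero
  have hcosh : cosh (arsinh (p.re / p.im)) = ‖(p : ℂ)‖ / p.im := by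
    rw [cosh_arsinh, ← sqrt_sq (by positivity : 0 ≤ ‖(p : ℂ)‖ / p.im)]
    congr 1
    rw [div_pow ‖(p : ℂ)‖, Complex.sq_norm, Complex.normSq_apply, coe_re, coe_im]
    field_simp
    ring
  refine ⟨arsinh (p.re / p.im), log ‖(p : ℂ)‖, UpperHalfPlane.ext (Complex.ext ?_ ?_)⟩ <;>
    simp only [fermiPt, coe_mk, coe_re, coe_im, sinh_arsinh, hcosh, exp_log hnorm] <;>
    field_simp

open Matrix in
def rot (θ : ℝ) : SL(2, ℝ) :=
  ⟨!![cos θ, -sin θ; sin θ, cos θ], by rw [det_fin_two_of]; linear_combination cos_sq_add_sin_sq θ⟩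

lemma coe_rot_smul (θ : ℝ) (z : ℍ) :
    ((rot θ • z : ℍ) : ℂ) = (cos θ * z - sin θ) / (sin θ * z + cos θ) := by
  rw [coe_specialLinearGroup_apply]
  simp [rot, sub_eq_add_neg]

lemma continuous_rot : Continuous rot :=
  (by fun_prop : Continuous fun θ : ℝ => !![cos θ, -sin θ; sin θ, cos θ]).subtype_mk _

lemma rot_smul_I (θ : ℝ) : rot θ • I = I := by
  have hden : (sin θ * Complex.I + cos θ : ℂ) ≠ 0 := fun h => by
    have hre := congrArg Complex.re h
    have him := congrArg Complex.im h
    simp only [Complex.add_re, Complex.add_im, Complex.mul_re, Complex.mul_im, Complex.ofReal_re,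
      Complex.ofReal_im, Complex.I_re, Complex.I_im, Complex.zero_re, Complex.zero_im] at hre him
    nlinarith [cos_sq_add_sin_sq θ]
  ext1
  rw [coe_rot_smul, coe_I, div_eq_iff hden]
  linear_combination (-(sin θ : ℂ)) * Complex.I_sq

lemma coe_rot_pi_div_two_smul (z : ℍ) : ((rot (π / 2) • z : ℍ) : ℂ) = -(z : ℂ)⁻¹ := by
  rw [coe_rot_smul]
  simp [neg_div]

/-- Rotating about `i` from `θ = 0` to `θ = π / 2` (where `rot` acts as `z ↦ -1/z`) changes the sign
of the real part of the image of `y`. -/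
lemma exists_smul_eq_I_and_re_eq_zero (x y : ℍ) : ∃ g : SL(2, ℝ), g • x = I ∧ (g • y).re = 0 := by
  have hx : (toSL2R x)⁻¹ • x = I := by rw [inv_smul_eq_iff, toSL2R_smul_I]
  set w := (toSL2R x)⁻¹ • y
  have hcont : Continuous fun θ => (rot θ • w).re :=
    continuous_re.comp (continuous_rot.smul continuous_const)
  have h₀ : (rot 0 • w).re = w.re := by
    simp [← coe_re, coe_rot_smul]
  have hπ : (rot (π / 2) • w).re = -w.re / Complex.normSq w := by
    rw [← coe_re, coe_rot_pi_div_two_smul, Complex.neg_re, Complex.inv_re, neg_div, coe_re]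
  have hQ : 0 < Complex.normSq w := Complex.normSq_pos.2 w.ne_zero
  have hmem : (0 : ℝ) ∈ Set.uIcc (rot 0 • w).re (rot (π / 2) • w).re := by
    rw [h₀, hπ, Set.mem_uIcc]
    rcases le_total 0 w.re with h | h
    · exact Or.inr ⟨div_nonpos_of_nonpos_of_nonneg (by linarith) hQ.le, h⟩
    · exact Or.inl ⟨h, div_nonneg (by linarith) hQ.le⟩
  obtain ⟨θ, -, hθ⟩ := intermediate_value_uIcc hcont.continuousOn hmem
  exact ⟨rot θ * (toSL2R x)⁻¹, by rw [mul_smul, hx, rot_smul_I], by rw [mul_smul]; exact hθ⟩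

lemma eq_axisPt_of_re_eq_zero {p : ℍ} (h : p.re = 0) : p = axisPt (log p.im) :=
  UpperHalfPlane.ext (Complex.ext h (exp_log p.im_pos).symm)

lemma axisPt_zero : axisPt 0 = I :=
  UpperHalfPlane.ext (Complex.ext rfl (by simp [axisPt]))

lemma rot_pi_div_two_smul_axisPt (s : ℝ) : rot (π / 2) • axisPt s = axisPt (-s) := by
  ext1
  rw [coe_rot_pi_div_two_smul]
  apply Complex.ext
  · simp [axisPt]
  · simp only [axisPt, Complex.neg_im, Complex.inv_im, Complex.normSq_mk, mul_zero, zero_add, exp_neg]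
    field_simp

lemma exists_smul_eq_axisPt {x y : ℍ} (hxy : x ≠ y) :
    ∃ (g : SL(2, ℝ)) (a b : ℝ), a < b ∧ g • x = axisPt a ∧ g • y = axisPt b := by
  obtain ⟨g, hx, hy⟩ := exists_smul_eq_I_and_re_eq_zero x y
  set s := log (g • y).im
  replace hx : g • x = axisPt 0 := hx.trans axisPt_zero.symm
  replace hy : g • y = axisPt s := eq_axisPt_of_re_eq_zero hy
  rcases lt_trichotomy 0 s with hs | hs | hs
  · exact ⟨g, 0, s, hs, hx, hy⟩
  · exact absurd (smul_left_cancel g (by rw [hx, hy, hs])) hxy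
  · refine ⟨rot (π / 2) * g, 0, -s, neg_pos.2 hs, ?_, ?_⟩
    · rw [mul_smul, hx, rot_pi_div_two_smul_axisPt, neg_zero]
    · rw [mul_smul, hy, rot_pi_div_two_smul_axisPt]

lemma exists_isLevelParametrization_axisPt {a b : ℝ} (hab : a < b) :
    ∃ P : ℝ × ℝ → ℍ, IsLevelParametrization (distSqSub (axisPt a) (axisPt b)) P := by
  set G : ℝ → ℝ → ℝ := fun r t =>
    arcosh (cosh r * cosh (t - a)) ^ 2 - arcosh (cosh r * cosh (t - b)) ^ 2
  have hG : ∀ r t, distSqSub (axisPt a) (axisPt b) (fermiPt r t) = G r t := fun r t => by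
    simp only [distSqSub, dist_fermiPt_axisPt, G]
  have hmono : ∀ r, StrictMono (G r) := fun r => by
    obtain ⟨g', hg', hg⟩ := exists_strictMono_hasDerivAt_sq_arcosh_mul_cosh (one_le_cosh r)
    exact strictMono_sub_comp_sub hg' hg hab
  have hGc : ∀ t, Continuous fun q : ℝ × ℝ => G q.1 t := fun t =>
    have h : ∀ s, Continuous fun q : ℝ × ℝ => arcosh (cosh q.1 * cosh (t - s)) := fun s =>
      continuous_arcosh_comp (by fun_prop) fun q => one_le_mul_cosh (one_le_cosh q.1) _
    ((h a).pow 2).sub ((h b).pow 2)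
  choose T hT using fun q : ℝ × ℝ =>
    surjective_sq_arcosh_mul_cosh_sub_sub (one_le_cosh q.1) hab q.2
  have hTc : Continuous T :=
    continuous_of_strictMono_of_apply_eq hGc (fun q => hmono q.1) continuous_snd hT
  refine ⟨fun q => fermiPt q.1 (T q), continuous_fermiPt.comp (continuous_fst.prodMk hTc), ?_,
    fun q => (hG _ _).trans (hT q)⟩
  intro p
  obtain ⟨r, t, rfl⟩ := exists_fermiPt_eq p
  exact ⟨(r, G r t), congrArg (fermiPt r) ((hmono r).injective (hT (r, G r t)))⟩

lemma exists_isLevelParametrization_distSqSub {x y : ℍ} (hxy : x ≠ y) :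
    ∃ P : ℝ × ℝ → ℍ, IsLevelParametrization (distSqSub x y) P := by
  obtain ⟨g, a, b, hab, hx, hy⟩ := exists_smul_eq_axisPt hxy
  obtain ⟨P, hP⟩ := exists_isLevelParametrization_axisPt hab
  rw [← hx, ← hy] at hP
  exact ⟨_, hP.comp_isometryEquiv (IsometryEquiv.constSMul g)⟩

lemma surjective_distSqSub {x y : ℍ} (hxy : x ≠ y) : Function.Surjective (distSqSub x y) := by
  obtain ⟨P, hP⟩ := exists_isLevelParametrization_distSqSub hxy
  exact fun k => ⟨P (0, k), hP.apply_eq _⟩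

end HyperbolicPlane

lemma dist_sq_bidisk (u v : Bidisk) :
    dist u v ^ 2 = dist u.fst v.fst ^ 2 + dist u.snd v.snd ^ 2 := by
  rw [WithLp.prod_dist_eq_add (by norm_num), ENNReal.toReal_ofNat, ← sqrt_eq_rpow, rpow_two,
    rpow_two, sq_sqrt (by positivity)]

lemma mem_E_toBD_iff {x₁ x₂ y₁ y₂ : ℍ} {p : Bidisk} :
    p ∈ E (toBD (x₁, x₂)) (toBD (y₁, y₂)) ↔ distSqSub x₁ y₁ p.fst = distSqSub y₂ x₂ p.snd := by
  change dist p _ = dist p _ ↔ _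
  rw [← sq_eq_sq₀ dist_nonneg dist_nonneg, dist_sq_bidisk, dist_sq_bidisk]
  change dist p.fst x₁ ^ 2 + dist p.snd x₂ ^ 2 = dist p.fst y₁ ^ 2 + dist p.snd y₂ ^ 2 ↔ _
  simp only [distSqSub]
  constructor <;> intro h <;> linarith

lemma isPreconnected_E {x₁ x₂ y₁ y₂ : ℍ} (h₁ : x₁ ≠ y₁) (h₂ : x₂ ≠ y₂) :
    IsPreconnected (E (toBD (x₁, x₂)) (toBD (y₁, y₂))) := by
  obtain ⟨P₁, hP₁⟩ := exists_isLevelParametrization_distSqSub h₁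
  obtain ⟨P₂, hP₂⟩ := exists_isLevelParametrization_distSqSub h₂.symm
  have : E (toBD (x₁, x₂)) (toBD (y₁, y₂)) =
      toBD '' {q | distSqSub x₁ y₁ q.1 = distSqSub y₂ x₂ q.2} := by
    ext p
    rw [mem_E_toBD_iff]
    exact ⟨fun h => ⟨(p.fst, p.snd), h, rfl⟩, by rintro ⟨q, hq, rfl⟩; exact hq⟩
  rw [this]
  exact (hP₁.isPreconnected_setOf_eq hP₂).image _ (WithLp.prod_continuous_toLp 2 _ _).continuousOn

lemma IsPreconnected.lt_of_lt_of_ne {X α : Type*} [TopologicalSpace X] [LinearOrder α]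
    [TopologicalSpace α] [OrderClosedTopology α] {S : Set X} (hS : IsPreconnected S)
    {f g : X → α} (hf : ContinuousOn f S) (hg : ContinuousOn g S) (hne : ∀ p ∈ S, f p ≠ g p)
    {p q : X} (hq : q ∈ S) (hp : p ∈ S) (hlt : f q < g q) : f p < g p := by
  by_contra! h
  obtain ⟨z, hz, hfg⟩ := hS.intermediate_value₂ hq hp hf hg hlt.le h
  exact hne z hz hfg

/-- If `E(𝐱,𝐲)` is disjoint from both `E(𝐱,γ(𝐱))` and `E(𝐱,γ⁻¹(𝐱))`, then `E(𝐱,𝐲)` is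
`γ`-invisible to `𝐱` iff its spine `E_0(𝐱,𝐲) = S_0(x₁,y₁) × S_0(y₂,x₂)` is
`γ`-invisible to `𝐱`. -/
theorem invisible_iff_spine_invisible
    (x₁ x₂ y₁ y₂ : UpperHalfPlane) (h₁ : x₁ ≠ y₁) (h₂ : x₂ ≠ y₂)
    (γ : Bidisk ≃ᵢ Bidisk)
    (hdisj₁ : E (toBD (x₁, x₂)) (toBD (y₁, y₂)) ∩
              E (toBD (x₁, x₂)) (γ (toBD (x₁, x₂))) = ∅)
    (hdisj₂ : E (toBD (x₁, x₂)) (toBD (y₁, y₂)) ∩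
              E (toBD (x₁, x₂)) (γ.symm (toBD (x₁, x₂))) = ∅) :
    (∀ p ∈ E (toBD (x₁, x₂)) (toBD (y₁, y₂)), Invisible γ (toBD (x₁, x₂)) p) ↔
    (∀ p₁ p₂ : UpperHalfPlane,
        dist p₁ x₁ ^ 2 - dist p₁ y₁ ^ 2 = 0 →
        dist p₂ y₂ ^ 2 - dist p₂ x₂ ^ 2 = 0 →
        Invisible γ (toBD (x₁, x₂)) (toBD (p₁, p₂))) := by
  set X := toBD (x₁, x₂)
  set S := E X (toBD (y₁, y₂))
  have hS : IsPreconnected S := isPreconnected_E h₁ h₂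
  obtain ⟨q₁, hq₁⟩ := surjective_distSqSub h₁ 0
  obtain ⟨q₂, hq₂⟩ := surjective_distSqSub h₂.symm 0
  have hq : toBD (q₁, q₂) ∈ S := mem_E_toBD_iff.2 (hq₁.trans hq₂.symm)
  have hcont : ∀ z : Bidisk, ContinuousOn (dist · z) S :=
    fun z => (continuous_id.dist continuous_const).continuousOn
  have hne : ∀ z, S ∩ E X z = ∅ → ∀ p ∈ S, dist p z ≠ dist p X :=
    fun z hz p hp h => Set.eq_empty_iff_forall_notMem.1 hz p ⟨hp, h.symm⟩
  refine ⟨fun H p₁ p₂ hp₁ hp₂ => H _ (mem_E_toBD_iff.2 (hp₁.trans hp₂.symm)), fun H p hp => ?_⟩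
  exact (H q₁ q₂ hq₁ hq₂).imp
    (hS.lt_of_lt_of_ne (hcont _) (hcont _) (hne _ hdisj₁) hq hp)
    (hS.lt_of_lt_of_ne (hcont _) (hcont _) (hne _ hdisj₂) hq hp)
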